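/- Let p ≥ 3 be a prime and let 3 ≤ r < s be integers with (r-1) ∤ (s-1) and (r-1) ∤ s. If h_p(a) = min h_p for some a ∈ A(s,r), then δ(a) ∈ Biv*(s,r); that is, the delta vector of any minimizer is bivalent and its first and last entries both equal [q]. -/

import Mathlib

/-!
Lowering a block `a m, …, a k` of an admissible tuple by one keeps it admissible when the gap in
front of the block is at least `2`. It multiplies the sum `X` of the terms of `h_p` for pairs
crossing the left end of the block by `p`, and the sum `Y` for pairs crossing its right end by
`p⁻¹`; so a minimizer satisfies `Y ≤ p X`.

If a gap `δ_j` exceeded a later gap `δ_k` by `2`, lower the block `j+1, …, k`: the sum `X` is at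
most `(p/(p-1))²` times `p^(-δ_j)`, while `Y ≥ p^(-δ_k) ≥ p² p^(-δ_j)`, impossible for `p ≥ 3`.
The reflection `a_i ↦ s-1-a_(r-1-i)` preserves `h_p` and reverses the delta vector; it handles an
earlier smaller gap, and turns the claim about the first gap into the one about the last.
Bivalent gaps summing to `s-1` with `(r-1) ∤ (s-1)` take exactly the values `[q]` and `[q]+1`.
If `δ_0 = [q]+1`, lower the initial run of gaps `[q]+1` in front of the first gap `[q]` (not the
last gap, since `(r-1) ∤ s`): then `p X` is a part of `Y`, and `Y` has a further positive term.
-/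

/-- `A(s,r)`: admissible exponent tuples, viewed as functions `ℕ → ℤ` whose relevant
entries are indices `0,…,r-1`: strictly increasing with `a 0 = 0` and `a (r-1) = s-1`. -/
def Admissible (s r : ℕ) (a : ℕ → ℤ) : Prop :=
  a 0 = 0 ∧ a (r - 1) = (s : ℤ) - 1 ∧ ∀ i, i + 1 < r → a i < a (i + 1)

/-- `h_p(x) = Σ_{k<i≤r} p^{-(x_i - x_k)}` (indices `0,…,r-1`). -/
noncomputable def hp (p r : ℕ) (a : ℕ → ℤ) : ℝ :=
  ∑ k ∈ Finset.range r, ∑ i ∈ Finset.range r,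
    if k < i then (p : ℝ) ^ (a k - a i) else 0

/-- `a` is admissible and attains `min h_p` over `A(s,r)`. -/
def IsMinimizer (p s r : ℕ) (a : ℕ → ℤ) : Prop :=
  Admissible s r a ∧ ∀ b : ℕ → ℤ, Admissible s r b → hp p r a ≤ hp p r b

/-- The delta vector of `a`: `δ_j(a) = a_{j+1} - a_j`, relevant for `j = 0,…,r-2`. -/
def dlt (a : ℕ → ℤ) (j : ℕ) : ℤ := a (j + 1) - a j

open Finset

variable {p s r : ℕ} {a : ℕ → ℤ}

lemma Admissible.sub_le_sub (ha : Admissible s r a) {i j : ℕ} (hij : i ≤ j) (hj : j < r) :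
    (j : ℤ) - i ≤ a j - a i := by
  induction j, hij using Nat.le_induction with
  | base => simp
  | succ n hin ih =>
    have := ha.2.2 n hj
    push_cast
    linarith [ih (by omega)]

lemma Admissible.one_le_dlt (ha : Admissible s r a) {j : ℕ} (hj : j + 1 < r) : 1 ≤ dlt a j := by
  have := ha.2.2 j hj
  unfold dlt
  omega

lemma Admissible.sum_dlt (ha : Admissible s r a) : ∑ j ∈ range (r - 1), dlt a j = s - 1 := by
  unfold dlt
  rw [sum_range_sub a, ha.2.1, ha.1, sub_zero]

lemma eq_mul_of_dlt_eq (h0 : a 0 = 0) {k : ℕ} {c : ℤ} (hc : ∀ i < k, dlt a i = c) :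
    ∀ i ≤ k, a i = i * c
  | 0, _ => by simp [h0]
  | i + 1, hi => by
    have := hc i hi
    unfold dlt at this
    rw [eq_mul_of_dlt_eq h0 hc i (by omega)] at this
    push_cast
    linarith

def reflectTuple (s r : ℕ) (a : ℕ → ℤ) (i : ℕ) : ℤ := s - 1 - a (r - 1 - i)

lemma Admissible.reflectTuple (ha : Admissible s r a) : Admissible s r (reflectTuple s r a) := by
  obtain ⟨h0, hlast, hmono⟩ := ha
  refine ⟨by simp [_root_.reflectTuple, hlast], by simp [_root_.reflectTuple, h0], fun i hi => ?_⟩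
  have := hmono (r - 1 - (i + 1)) (by omega)
  rw [show r - 1 - (i + 1) + 1 = r - 1 - i by omega] at this
  simp only [_root_.reflectTuple]
  linarith

lemma dlt_reflectTuple {j : ℕ} (hj : j + 1 < r) :
    dlt (reflectTuple s r a) j = dlt a (r - 2 - j) := by
  simp only [dlt, reflectTuple, show r - 1 - (j + 1) = r - 2 - j by omega,
    show r - 2 - j + 1 = r - 1 - j by omega]
  ring

lemma hp_reflectTuple : hp p r (reflectTuple s r a) = hp p r a := by
  unfold hp
  rw [← sum_range_reflect]
  refine (sum_congr rfl fun k _ => (sum_range_reflect _ r).symm).trans ?_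
  rw [sum_comm]
  refine sum_congr rfl fun i hi => sum_congr rfl fun k hk => ?_
  simp only [mem_range] at hi hk
  simp only [reflectTuple, show r - 1 - (r - 1 - i) = i by omega,
    show r - 1 - (r - 1 - k) = k by omega, show r - 1 - k < r - 1 - i ↔ i < k by omega]
  ring_nf

lemma IsMinimizer.reflectTuple (ha : IsMinimizer p s r a) :
    IsMinimizer p s r (reflectTuple s r a) :=
  ⟨ha.1.reflectTuple, fun b hb => hp_reflectTuple.trans_le (ha.2 b hb)⟩

def lowerBlock (a : ℕ → ℤ) (m k : ℕ) (i : ℕ) : ℤ := if m ≤ i ∧ i ≤ k then a i - 1 else a i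

lemma Admissible.lowerBlock (ha : Admissible s r a) {m k : ℕ} (hm : 1 ≤ m) (hk : k + 1 < r)
    (hgap : a (m - 1) + 1 < a m) : Admissible s r (lowerBlock a m k) := by
  obtain ⟨h0, hlast, hmono⟩ := ha
  refine ⟨by simp [_root_.lowerBlock, h0]; omega, by simp [_root_.lowerBlock, hlast]; omega,
    fun i hi => ?_⟩
  have := hmono i hi
  by_cases him : i + 1 = m
  · subst him
    simp only [_root_.lowerBlock, Nat.add_sub_cancel] at hgap ⊢
    split_ifs <;> omega
  · simp only [_root_.lowerBlock]
    split_ifs <;> omega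

noncomputable def crossLeft (p : ℕ) (a : ℕ → ℤ) (m k : ℕ) : ℝ :=
  ∑ u ∈ range m, ∑ v ∈ Icc m k, (p : ℝ) ^ (a u - a v)

noncomputable def crossRight (p r : ℕ) (a : ℕ → ℤ) (m k : ℕ) : ℝ :=
  ∑ u ∈ Icc m k, ∑ v ∈ Ioo k r, (p : ℝ) ^ (a u - a v)

lemma sum_range_sum_range_ite_mem {f : ℕ → ℕ → ℝ} {S T : Finset ℕ} (hS : S ⊆ range r)
    (hT : T ⊆ range r) :
    ∑ u ∈ range r, ∑ v ∈ range r, (if (u, v) ∈ S ×ˢ T then f u v else 0) =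
      ∑ u ∈ S, ∑ v ∈ T, f u v := by
  rw [← sum_product', sum_ite_mem, inter_eq_right.2 (product_subset_product hS hT), sum_product']

lemma hp_lowerBlock (hp0 : p ≠ 0) {m k : ℕ} (hmk : m ≤ k) (hk : k < r) :
    hp p r (lowerBlock a m k) =
      hp p r a + (p - 1) * crossLeft p a m k + ((p : ℝ)⁻¹ - 1) * crossRight p r a m k := by
  have hP : (p : ℝ) ≠ 0 := by exact_mod_cast hp0
  have hL : crossLeft p a m k = ∑ u ∈ range r, ∑ v ∈ range r,
      if (u, v) ∈ range m ×ˢ Icc m k then (p : ℝ) ^ (a u - a v) else 0 :=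
    (sum_range_sum_range_ite_mem (by intro; simp; omega) (by intro; simp; omega)).symm
  have hR : crossRight p r a m k = ∑ u ∈ range r, ∑ v ∈ range r,
      if (u, v) ∈ Icc m k ×ˢ Ioo k r then (p : ℝ) ^ (a u - a v) else 0 :=
    (sum_range_sum_range_ite_mem (by intro; simp; omega) (by intro; simp)).symm
  rw [hL, hR, hp, hp, mul_sum, mul_sum, ← sum_add_distrib, ← sum_add_distrib]
  refine sum_congr rfl fun u _ => ?_
  rw [mul_sum, mul_sum, ← sum_add_distrib, ← sum_add_distrib]
  refine sum_congr rfl fun v hv => ?_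
  simp only [lowerBlock, mem_product, mem_range, mem_Icc, mem_Ioo] at hv ⊢
  split_ifs <;>
    first
      | omega
      | (rw [show a u - 1 - (a v - 1) = a u - a v by ring]; ring)
      | (rw [show a u - (a v - 1) = a u - a v + 1 by ring, zpow_add_one₀ hP]; ring)
      | (rw [show a u - 1 - a v = a u - a v - 1 by ring, zpow_sub_one₀ hP]; ring)
      | ring

lemma IsMinimizer.crossRight_le (ha : IsMinimizer p s r a) (hp1 : 1 < p) {m k : ℕ} (hm : 1 ≤ m)
    (hmk : m ≤ k) (hk : k + 1 < r) (hgap : a (m - 1) + 1 < a m) :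
    crossRight p r a m k ≤ p * crossLeft p a m k := by
  have hP : (1 : ℝ) < p := by exact_mod_cast hp1
  have hmin := ha.2 _ (ha.1.lowerBlock hm hk hgap)
  rw [hp_lowerBlock (by omega) hmk (by omega)] at hmin
  have key : (p - 1) * crossLeft p a m k + ((p : ℝ)⁻¹ - 1) * crossRight p r a m k =
      (p - 1) / p * (p * crossLeft p a m k - crossRight p r a m k) := by
    field_simp
    ring
  have h : 0 ≤ (p - 1) / p * (p * crossLeft p a m k - crossRight p r a m k) := by
    rw [← key]
    linarith
  linarith [nonneg_of_mul_nonneg_right h (div_pos (by linarith) (by linarith))]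

lemma Admissible.crossLeft_le (ha : Admissible s r a) (hp1 : 1 < p) {m k : ℕ} (hm : 1 ≤ m)
    (hk : k < r) :
    crossLeft p a m k ≤ (p : ℝ) ^ (a (m - 1) - a m) * (1 - (p : ℝ)⁻¹)⁻¹ ^ 2 := by
  have hP : (1 : ℝ) < p := by exact_mod_cast hp1
  set x := (p : ℝ)⁻¹
  set T := (p : ℝ) ^ (a (m - 1) - a m)
  have hx0 : 0 ≤ x := by positivity
  have hx1 : x < 1 := inv_lt_one_of_one_lt₀ hP
  have hgeom (n : ℕ) : ∑ i ∈ range n, x ^ i ≤ (1 - x)⁻¹ := by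
    have := geom_sum_Ico_le_of_lt_one (m := 0) (n := n) hx0 hx1
    rwa [← range_eq_Ico, pow_zero, one_div] at this
  have hterm : ∀ u ∈ range m, ∀ v ∈ Icc m k,
      (p : ℝ) ^ (a u - a v) ≤ T * (x ^ (m - 1 - u) * x ^ (v - m)) := by
    intro u hu v hv
    simp only [mem_range, mem_Icc] at hu hv
    have h1 := ha.sub_le_sub (i := u) (j := m - 1) (by omega) (by omega)
    have h2 := ha.sub_le_sub hv.1 (by omega)
    calc (p : ℝ) ^ (a u - a v)
        ≤ (p : ℝ) ^ (a (m - 1) - a m - (m - 1 - u : ℕ) - (v - m : ℕ)) :=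
          zpow_le_zpow_right₀ hP.le (by omega)
      _ = T * (x ^ (m - 1 - u) * x ^ (v - m)) := by
          rw [zpow_sub₀ (by positivity), zpow_sub₀ (by positivity), zpow_natCast, zpow_natCast]
          simp only [x, T, inv_pow, div_eq_mul_inv, mul_assoc]
  have hleft : ∑ u ∈ range m, x ^ (m - 1 - u) ≤ (1 - x)⁻¹ :=
    (sum_range_reflect (fun i => x ^ i) m).trans_le (hgeom m)
  have hright : ∑ v ∈ Icc m k, x ^ (v - m) ≤ (1 - x)⁻¹ := by
    rw [← Finset.Ico_add_one_right_eq_Icc, sum_Ico_eq_sum_range]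
    simpa using hgeom (k + 1 - m)
  calc crossLeft p a m k
      ≤ ∑ u ∈ range m, ∑ v ∈ Icc m k, T * (x ^ (m - 1 - u) * x ^ (v - m)) :=
        sum_le_sum fun u hu => sum_le_sum fun v hv => hterm u hu v hv
    _ = T * ((∑ u ∈ range m, x ^ (m - 1 - u)) * ∑ v ∈ Icc m k, x ^ (v - m)) := by
        rw [sum_mul_sum, mul_sum]
        simp_rw [mul_sum]
    _ ≤ T * (1 - x)⁻¹ ^ 2 := by
        rw [sq]
        gcongr

lemma zpow_le_crossRight {m k : ℕ} (hmk : m ≤ k) (hk : k + 1 < r) :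
    (p : ℝ) ^ (a k - a (k + 1)) ≤ crossRight p r a m k := by
  have hnn (u v : ℕ) : (0 : ℝ) ≤ (p : ℝ) ^ (a u - a v) := by positivity
  calc (p : ℝ) ^ (a k - a (k + 1)) ≤ ∑ v ∈ Ioo k r, (p : ℝ) ^ (a k - a v) :=
        single_le_sum (fun v _ => hnn k v) (by simp; omega)
    _ ≤ crossRight p r a m k :=
        single_le_sum (f := fun u => ∑ v ∈ Ioo k r, (p : ℝ) ^ (a u - a v))
          (fun u _ => sum_nonneg fun v _ => hnn u v) (by simp; omega)

lemma IsMinimizer.dlt_le_dlt_add_one_of_lt (ha : IsMinimizer p s r a) (hp3 : 3 ≤ p) {j k : ℕ}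
    (hjk : j < k) (hk : k + 1 < r) : dlt a j ≤ dlt a k + 1 := by
  by_contra! h
  have hP : (3 : ℝ) ≤ p := by exact_mod_cast hp3
  have hdk := ha.1.one_le_dlt hk
  have hgap : a (j + 1 - 1) + 1 < a (j + 1) := by
    unfold dlt at *
    simp only [Nat.add_sub_cancel]
    omega
  set T := (p : ℝ) ^ (a j - a (j + 1))
  have hT : 0 < T := by positivity
  have hY : (p : ℝ) ^ 2 * T ≤ crossRight p r a (j + 1) k :=
    calc (p : ℝ) ^ 2 * T = (p : ℝ) ^ (a j - a (j + 1) + 2) := by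
          rw [zpow_add₀ (by positivity), zpow_two, sq, mul_comm]
      _ ≤ (p : ℝ) ^ (a k - a (k + 1)) :=
          zpow_le_zpow_right₀ (by linarith) (by unfold dlt at h; omega)
      _ ≤ crossRight p r a (j + 1) k := zpow_le_crossRight (by omega) hk
  have hX := ha.1.crossLeft_le (by omega : 1 < p) (m := j + 1) (by omega) (by omega : k < r)
  rw [Nat.add_sub_cancel] at hX
  have hXY := ha.crossRight_le (by omega) (by omega) (by omega) hk hgap
  have hratio : (1 - (p : ℝ)⁻¹)⁻¹ ^ 2 < p := by
    have : (p : ℝ)⁻¹ ≤ 3⁻¹ := inv_anti₀ (by norm_num) hP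
    rw [inv_pow, inv_lt_comm₀ (pow_pos (by linarith) 2) (by positivity)]
    nlinarith
  have : (p : ℝ) ^ 2 * T < p ^ 2 * T := calc
    (p : ℝ) ^ 2 * T ≤ p * (T * (1 - (p : ℝ)⁻¹)⁻¹ ^ 2) := hY.trans (hXY.trans (by gcongr))
    _ < p * (T * p) := by gcongr
    _ = p ^ 2 * T := by ring
  exact lt_irrefl _ this

lemma IsMinimizer.dlt_sub_dlt_le_one (ha : IsMinimizer p s r a) (hp3 : 3 ≤ p) {j k : ℕ}
    (hj : j < r - 1) (hk : k < r - 1) : dlt a j - dlt a k ≤ 1 := by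
  rcases lt_trichotomy j k with hjk | rfl | hkj
  · linarith [ha.dlt_le_dlt_add_one_of_lt hp3 hjk (by omega)]
  · simp
  · have := ha.reflectTuple.dlt_le_dlt_add_one_of_lt hp3 (j := r - 2 - j) (k := r - 2 - k)
      (by omega) (by omega)
    rw [dlt_reflectTuple (by omega), dlt_reflectTuple (by omega),
      show r - 2 - (r - 2 - j) = j by omega, show r - 2 - (r - 2 - k) = k by omega] at this
    linarith

lemma exists_eq_ediv_and_forall_eq_ediv_or {d : ℕ → ℤ} {n : ℕ} {S : ℤ}
    (hsum : ∑ j ∈ range n, d j = S) (hd : ∀ i < n, ∀ j < n, d i - d j ≤ 1) (hS : ¬ (n : ℤ) ∣ S) :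
    (∃ j < n, d j = S / n) ∧ ∀ j < n, d j = S / n ∨ d j = S / n + 1 := by
  have hn : (range n).Nonempty := by
    rw [nonempty_range_iff]
    rintro rfl
    simp [← hsum] at hS
  obtain ⟨j₀, hj₀, hmin⟩ := exists_min_image (range n) d hn
  rw [mem_range] at hj₀
  have hlow : n * d j₀ ≤ S := by
    simpa [← hsum] using card_nsmul_le_sum (range n) d (d j₀) hmin
  have hup : S ≤ n * (d j₀ + 1) := by
    simpa [← hsum] using sum_le_card_nsmul (range n) d (d j₀ + 1)
      fun j hj => by linarith [hd j (mem_range.1 hj) j₀ hj₀]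
  have hlow' : n * d j₀ ≠ S := fun h => hS ⟨d j₀, h.symm⟩
  have hup' : n * (d j₀ + 1) ≠ S := fun h => hS ⟨d j₀ + 1, h.symm⟩
  have hnpos : (0 : ℤ) < n := by have := hn.ne_empty; simp at this; omega
  have hq : d j₀ = S / n := le_antisymm
    (Int.le_ediv_of_mul_le hnpos (by rw [mul_comm]; exact hlow))
    (by have := Int.ediv_lt_of_lt_mul hnpos (by rw [mul_comm]; exact lt_of_le_of_ne hup hup'.symm)
        omega)
  refine ⟨⟨j₀, hj₀, hq⟩, fun j hj => ?_⟩
  have := hmin j (mem_range.2 hj)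
  have := hd j hj j₀ hj₀
  omega

lemma IsMinimizer.dlt_eq_or (ha : IsMinimizer p s r a) (hp3 : 3 ≤ p)
    (hndvd : ¬ (r - 1) ∣ (s - 1)) :
    (∃ j < r - 1, dlt a j = ((s - 1) / (r - 1) : ℕ)) ∧
      ∀ j < r - 1, dlt a j = ((s - 1) / (r - 1) : ℕ) ∨ dlt a j = ((s - 1) / (r - 1) : ℕ) + 1 := by
  have hs : 1 ≤ s := by
    by_contra hs
    exact hndvd (by simp [show s = 0 by omega])
  have hcast : ((s - 1 : ℕ) : ℤ) = s - 1 := by omega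
  rw [Int.natCast_div, hcast]
  refine exists_eq_ediv_and_forall_eq_ediv_or ha.1.sum_dlt
    (fun i hi j hj => ha.dlt_sub_dlt_le_one hp3 hi hj) ?_
  rwa [← hcast, Int.natCast_dvd_natCast]

lemma IsMinimizer.dlt_ne_of_forall_lt_eq_add_one (ha : IsMinimizer p s r a) (hp1 : 1 < p)
    {q : ℤ} (hq : 1 ≤ q) {k : ℕ} (hk : 1 ≤ k) (hkr : k + 2 < r)
    (hrise : ∀ i < k, dlt a i = q + 1) : dlt a k ≠ q := by
  intro hkq
  have hP : (1 : ℝ) < p := by exact_mod_cast hp1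
  have hprefix := eq_mul_of_dlt_eq ha.1.1 hrise
  have hak : a (k + 1) = k * (q + 1) + q := by
    have := hprefix k le_rfl
    unfold dlt at hkq
    linarith
  have hgap : a (1 - 1) + 1 < a 1 := by
    rw [Nat.sub_self, hprefix 0 (by omega), hprefix 1 hk]
    push_cast
    omega
  have hXY := ha.crossRight_le hp1 le_rfl hk (by omega) hgap
  -- `p` times the pairs `(0, v)` are exactly the pairs `(k + 1 - v, k + 1)`
  have hX : p * crossLeft p a 1 k = ∑ u ∈ Icc 1 k, (p : ℝ) ^ (a u - a (k + 1)) := by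
    rw [crossLeft, sum_range_one, mul_sum]
    refine sum_nbij' (fun v => k + 1 - v) (fun u => k + 1 - u) ?_ ?_ ?_ ?_ fun v hv => ?_ <;>
      simp only [mem_Icc] at * <;> try (intros; omega)
    rw [← zpow_one_add₀ (by positivity), ha.1.1, hprefix v (by omega),
      hprefix (k + 1 - v) (by omega), hak]
    congr 1
    push_cast [show v ≤ k + 1 by omega]
    ring
  have hY : ∑ u ∈ Icc 1 k, (p : ℝ) ^ (a u - a (k + 1)) + (p : ℝ) ^ (a k - a (k + 2)) ≤
      crossRight p r a 1 k := by
    have hnn (u v : ℕ) : (0 : ℝ) ≤ (p : ℝ) ^ (a u - a v) := by positivity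
    calc _ ≤ ∑ u ∈ Icc 1 k, (p : ℝ) ^ (a u - a (k + 1)) +
          ∑ u ∈ Icc 1 k, (p : ℝ) ^ (a u - a (k + 2)) := by
          gcongr
          exact single_le_sum (fun u _ => hnn u (k + 2)) (by simp; omega)
      _ = ∑ u ∈ Icc 1 k, ∑ v ∈ {k + 1, k + 2}, (p : ℝ) ^ (a u - a v) := by
          rw [← sum_add_distrib]
          simp_rw [sum_pair (show k + 1 ≠ k + 2 by omega)]
      _ ≤ crossRight p r a 1 k :=
          sum_le_sum fun u _ => sum_le_sum_of_subset_of_nonneg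
            (by intro v; simp; omega) fun v _ _ => hnn u v
  have : (0 : ℝ) < (p : ℝ) ^ (a k - a (k + 2)) := by positivity
  linarith

lemma IsMinimizer.dlt_zero_eq (ha : IsMinimizer p s r a) (hp3 : 3 ≤ p)
    (hndvd1 : ¬ (r - 1) ∣ (s - 1)) (hndvd2 : ¬ (r - 1) ∣ s) :
    dlt a 0 = ((s - 1) / (r - 1) : ℕ) := by
  obtain ⟨hex, hvals⟩ := ha.dlt_eq_or hp3 hndvd1
  set q : ℤ := (((s - 1) / (r - 1) : ℕ) : ℤ)
  have hq : 1 ≤ q := by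
    obtain ⟨j, hj, hjq⟩ := hex
    exact hjq ▸ ha.1.one_le_dlt (by omega)
  set k := Nat.find hex
  obtain ⟨hkr, hkq⟩ : k < r - 1 ∧ dlt a k = q := Nat.find_spec hex
  have hrise : ∀ i < k, dlt a i = q + 1 := fun i hi =>
    (hvals i (by omega)).resolve_left fun h => Nat.find_min hex hi ⟨by omega, h⟩
  rcases Nat.eq_zero_or_pos k with hk0 | hk1
  · rwa [hk0] at hkq
  by_cases hlast : k = r - 2
  · refine absurd ?_ hndvd2
    have hsum := ha.1.sum_dlt
    rw [show r - 1 = k + 1 by omega, sum_range_succ, sum_congr rfl fun i hi => hrise i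
      (mem_range.1 hi), sum_const, card_range, nsmul_eq_mul, hkq] at hsum
    rw [← Int.natCast_dvd_natCast]
    have hk : (k : ℤ) + 1 = r - 1 := by omega
    exact ⟨q + 1, by push_cast [show 1 ≤ r by omega]; rw [← hk]; linarith⟩
  · exact absurd hkq (ha.dlt_ne_of_forall_lt_eq_add_one (by omega) hq hk1 (by omega) hrise)

theorem stmt10_general (p s r : ℕ) (hp3 : 3 ≤ p)
    (hndvd1 : ¬ (r - 1) ∣ (s - 1)) (hndvd2 : ¬ (r - 1) ∣ s)
    (fq : ℤ) (hfq : fq = (((s - 1) / (r - 1) : ℕ) : ℤ))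
    (a : ℕ → ℤ) (ha : IsMinimizer p s r a) :
    (∀ j < r - 1, ∀ k, k < r - 1 → dlt a j - dlt a k ≤ 1) ∧
    (∀ j < r - 1, dlt a j = fq ∨ dlt a j = fq + 1) ∧
    dlt a 0 = fq ∧ dlt a (r - 2) = fq := by
  subst hfq
  obtain ⟨⟨j, hj, -⟩, hvals⟩ := ha.dlt_eq_or hp3 hndvd1
  refine ⟨fun j hj k hk => ha.dlt_sub_dlt_le_one hp3 hj hk, hvals,
    ha.dlt_zero_eq hp3 hndvd1 hndvd2, ?_⟩
  rw [← Nat.sub_zero (r - 2), ← dlt_reflectTuple (s := s) (by omega)]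
  exact ha.reflectTuple.dlt_zero_eq hp3 hndvd1 hndvd2

/-- Proposition 4.1 (framing): if `(r-1) ∤ (s-1)`, `(r-1) ∤ s` and `a` minimizes `h_p`
over `A(s,r)`, then `δ(a) ∈ Biv*(s,r)`: it is bivalent (any two entries differ by at
most 1; here all entries lie in `{[q], [q]+1}`) and its first and last entries both
equal `[q] = ⌊(s-1)/(r-1)⌋`. -/
theorem stmt10 (p s r : ℕ) (hpp : p.Prime) (hp3 : 3 ≤ p) (hr : 3 ≤ r) (hrs : r < s)
    (hndvd1 : ¬ (r - 1) ∣ (s - 1)) (hndvd2 : ¬ (r - 1) ∣ s)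
    (fq : ℤ) (hfq : fq = (((s - 1) / (r - 1) : ℕ) : ℤ))
    (a : ℕ → ℤ) (ha : IsMinimizer p s r a) :
    (∀ j < r - 1, ∀ k, k < r - 1 → dlt a j - dlt a k ≤ 1) ∧
    (∀ j < r - 1, dlt a j = fq ∨ dlt a j = fq + 1) ∧
    dlt a 0 = fq ∧ dlt a (r - 2) = fq :=
  stmt10_general p s r hp3 hndvd1 hndvd2 fq hfq a ha
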